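/- Let Ω be an invertible class on ℙ^n, let Q be a self-conjugate (0,1,p,Ω)-Euler data, let k₀ ≥ 1 and k★ ≥ 0 be heights, and let f ∈ q·F[[q]]. Then there exists a (0,1,p,Ω)-Euler data Q̃ linked to Q which agrees with Q at every height k ≠ k₀ and such that HG[𝓘(Q̃_{k₀})] = HG[𝓘(Q_{k₀})] + f · HG[𝓘(Q_{k★})] in A[[t,q]]. -/

import Mathlib

open Polynomial

set_option maxHeartbeats 1000000
set_option synthInstance.maxHeartbeats 400000

noncomputable section

/-- The ground field `F = ℂ(λ₀,…,λₙ)`, the field of rational functions in the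
equivariant weights `λ₀,…,λₙ`. -/
def F (n : ℕ) : Type := FractionRing (MvPolynomial (Fin (n+1)) ℂ)

instance (n : ℕ) : Field (F n) :=
  inferInstanceAs (Field (FractionRing (MvPolynomial (Fin (n+1)) ℂ)))

instance (n : ℕ) : Algebra (MvPolynomial (Fin (n+1)) ℂ) (F n) :=
  inferInstanceAs (Algebra (MvPolynomial (Fin (n+1)) ℂ)
    (FractionRing (MvPolynomial (Fin (n+1)) ℂ)))

/-- The weight `λᵢ` as an element of `F`. -/
def lam (n : ℕ) (i : Fin (n+1)) : F n :=
  algebraMap (MvPolynomial (Fin (n+1)) ℂ) (F n) (MvPolynomial.X i)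

/-- The polynomial ring `F[ℏ]`.  The variable `X` plays the role of `ℏ`. -/
abbrev Fh (n : ℕ) : Type := Polynomial (F n)

/-- The element `λᵢ + rℏ` of `F[ℏ]`. -/
def pt (n : ℕ) (i : Fin (n+1)) (r : ℕ) : Fh n := C (lam n i) + (r : Fh n) * X

/-- The generator `∏_{l=0}^{n} ∏_{m=0}^{d} (κ − λ_l − mℏ)` of the relation ideal
of the localized equivariant cohomology of `N_d`; the outer polynomial
variable `X` plays the role of `κ`. -/
def genN (n d : ℕ) : Polynomial (Fh n) :=
  ∏ l : Fin (n+1), ∏ m ∈ Finset.range (d+1), (X - C (pt n l m))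

/-- Classes on the linear model `N_d`:
`F[ℏ][κ] / (∏_{l=0}^{n} ∏_{m=0}^{d} (κ − λ_l − mℏ))`. -/
abbrev ClassN (n d : ℕ) : Type :=
  Polynomial (Fh n) ⧸ Ideal.span {genN n d}

lemma eval_genN (n d : ℕ) (i : Fin (n+1)) (r : ℕ) (hr : r ≤ d) :
    Polynomial.eval (pt n i r) (genN n d) = 0 := by
  rw [genN, Polynomial.eval_prod]
  refine Finset.prod_eq_zero (Finset.mem_univ i) ?_
  rw [Polynomial.eval_prod]
  refine Finset.prod_eq_zero (Finset.mem_range.mpr (Nat.lt_succ_of_le hr)) ?_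
  simp

/-- Restriction `Q(λᵢ + rℏ) ∈ F[ℏ]` of a class `Q` on `N_d` (for `r ≤ d`):
evaluation of any representative at `κ = λᵢ + rℏ`. -/
def rest {n d : ℕ} (i : Fin (n+1)) (r : ℕ) (hr : r ≤ d) : ClassN n d →+* Fh n :=
  Ideal.Quotient.lift _ (Polynomial.evalRingHom (pt n i r)) (by
    intro a ha
    rw [Ideal.mem_span_singleton] at ha
    obtain ⟨c, rfl⟩ := ha
    simp [eval_genN n d i r hr])

/-- `Ω`-Euler data, where the invertible class `Ω` on `ℙⁿ` is identified with the family
of its restrictions `Ω(λᵢ) ∈ F` (the weights `λᵢ` being pairwise distinct, a class on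
`ℙⁿ` is precisely such a family). -/
def IsEulerData {n : ℕ} (Ω : Fin (n+1) → F n) (Q : (d : ℕ) → ClassN n d) : Prop :=
  (∀ i, rest i 0 le_rfl (Q 0) = C (Ω i)) ∧
  ∀ d r, 0 < r → ∀ hr : r < d, ∀ i : Fin (n+1),
    C (Ω i) * rest i r hr.le (Q d) =
      rest i r le_rfl (Q r) * rest i 0 (Nat.zero_le _) (Q (d - r))

/-- `(0,1,β,Ω)`-Euler data; the classes `β`, `Ω` on `ℙⁿ` are identified with the
families of their restrictions at the fixed points. -/
def Is01EulerData {n : ℕ} (β Ω : Fin (n+1) → F n) (Q : (d : ℕ) → ℕ → ClassN n d) : Prop :=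
  (∀ (k : ℕ) i, rest i 0 le_rfl (Q 0 k) = C (β i ^ k * Ω i)) ∧
  ∀ d, 1 ≤ d → ∀ r, ∀ hr : r ≤ d, ∀ i : Fin (n+1), ∀ k : ℕ,
    C (Ω i) * rest i r hr (Q d k) =
      rest i r le_rfl (Q r 0) * rest i 0 (Nat.zero_le _) (Q (d - r) k)


/-- The field `F(ℏ)` of rational functions in `ℏ`, realized as the fraction field
of `F[ℏ]`. -/
def FH (n : ℕ) : Type := FractionRing (Fh n)

instance (n : ℕ) : Field (FH n) := inferInstanceAs (Field (FractionRing (Fh n)))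

instance (n : ℕ) : Algebra (Fh n) (FH n) :=
  inferInstanceAs (Algebra (Fh n) (FractionRing (Fh n)))

/-- The canonical embedding `F[ℏ] → F(ℏ)`. -/
def toFH {n : ℕ} : Fh n →+* FH n := algebraMap (Fh n) (FH n)

/-- `λᵢ` as an element of `F(ℏ)`. -/
def lamF (n : ℕ) (i : Fin (n+1)) : FH n := toFH (C (lam n i))

/-- `ℏ` as an element of `F(ℏ)`. -/
def hbarF (n : ℕ) : FH n := toFH (X : Fh n)

/-- `Φ_d` evaluated at `p = λᵢ`:  `∏_{l=0}^{n} ∏_{m=1}^{d} (λᵢ − λ_l − mℏ) ∈ F(ℏ)`. -/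
def PhiF (n d : ℕ) (i : Fin (n+1)) : FH n :=
  toFH (∏ l : Fin (n+1), ∏ m ∈ Finset.Icc 1 d, (C (lam n i - lam n l) - (m : Fh n) * X))

/-- `𝓘(Q) ∈ A = F(ℏ)[p]/(∏_l (p−λ_l))` for a class `Q` on `N_d`.  Since the `λ_l`
are pairwise distinct, `A` is identified (by restriction, i.e. by the Chinese
remainder theorem) with the ring of `(n+1)`-tuples in `F(ℏ)`; `𝓘(Q)` is the tuple of
restrictions `Q(λᵢ) ∈ F[ℏ] ⊆ F(ℏ)`. -/
def Iclass {n d : ℕ} (Q : ClassN n d) : Fin (n+1) → FH n :=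
  fun i => toFH (rest i 0 (Nat.zero_le d) Q)

/-- The coefficient of `tᵇ qᵉ` in the `i`-th component of the hypergeometric series
`HG[B] = exp(−pt/ℏ)·(B₀ + Σ_{d≥1} qᵈ·B_d·Φ_d⁻¹) ∈ A[[t,q]]`, an element of
`A[[t,q]]` being identified with the family of coefficient functions
`(i, b, e) ↦ (coefficient of tᵇ qᵉ in the i-th component)`. -/
def HGc {n : ℕ} (B : ℕ → Fin (n+1) → FH n) : Fin (n+1) → ℕ → ℕ → FH n :=
  fun i b e =>
    ((-(lamF n i) / hbarF n) ^ b / (Nat.factorial b : FH n)) * (B e i / PhiF n e i)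

/-- The conjugation `ℏ ↦ −ℏ` on `F[ℏ]`. -/
def conjH {n : ℕ} (f : Fh n) : Fh n := f.comp (-X)

/-- A height-`0` datum is self-conjugate if `Q_{d,0}(λᵢ + dℏ) = conj(Q_{d,0}(λᵢ))`. -/
def SelfConjugate {n : ℕ} (Q : (d : ℕ) → ClassN n d) : Prop :=
  ∀ d : ℕ, 1 ≤ d → ∀ i : Fin (n+1),
    rest i d le_rfl (Q d) = conjH (rest i 0 (Nat.zero_le d) (Q d))

/-- Linking via the height-`0` data: `Q_{d,0}(λᵢ)` and `P_{d,0}(λᵢ)` agree at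
`ℏ = (λᵢ − λⱼ)/d` for all `d ≥ 1` and `i ≠ j`. -/
def Linked0 {n : ℕ} (Q P : (d : ℕ) → ClassN n d) : Prop :=
  ∀ d : ℕ, 1 ≤ d → ∀ i j : Fin (n+1), i ≠ j →
    Polynomial.eval ((lam n i - lam n j) / (d : F n)) (rest i 0 (Nat.zero_le d) (Q d)) =
    Polynomial.eval ((lam n i - lam n j) / (d : F n)) (rest i 0 (Nat.zero_le d) (P d))

/-- The exponential `exp(G) = Σ_j G^j/j!` of a `q`-power series with vanishing
constant term (defined coefficientwise; the sum is finite in each degree). -/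
def expQ {n : ℕ} (G : PowerSeries (FH n)) : PowerSeries (FH n) :=
  PowerSeries.mk fun e => ∑ j ∈ Finset.range (e+1),
    PowerSeries.coeff e (G ^ j) / (Nat.factorial j : FH n)

/-- Multiplication of an element of `A[[t,q]]` (given by its coefficient functions)
by a power series in `q` alone. -/
def mulQ {n : ℕ} (c : PowerSeries (FH n)) (H : Fin (n+1) → ℕ → ℕ → FH n) :
    Fin (n+1) → ℕ → ℕ → FH n :=
  fun i b e => ∑ e1 ∈ Finset.range (e+1), PowerSeries.coeff e1 c * H i b (e - e1)

/-! The new Euler data changes only height `k₀`, by adding the `q`-series product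
`Σ_{s ≤ d} f_s · Q_{d-s,k★} · ∏_l ∏_{m=d-s+1}^{d} (κ - λ_l - mℏ)`.  The appended
product vanishes at `κ = λ_i + rℏ` for `r > d - s`, which makes each summand satisfy
the Euler condition, and at `κ = λ_i` it is exactly the quotient `Φ_d / Φ_{d-s}`, which
turns `HG` of the summand into `f_s q^s · HG[𝓘(Q_{k★})]`. -/

instance (n : ℕ) : IsFractionRing (MvPolynomial (Fin (n+1)) ℂ) (F n) :=
  inferInstanceAs (IsFractionRing (MvPolynomial (Fin (n+1)) ℂ)
    (FractionRing (MvPolynomial (Fin (n+1)) ℂ)))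

instance (n : ℕ) : CharZero (F n) :=
  charZero_of_injective_algebraMap
    (IsFractionRing.injective (MvPolynomial (Fin (n+1)) ℂ) (F n))

instance (n : ℕ) : IsFractionRing (Fh n) (FH n) :=
  inferInstanceAs (IsFractionRing (Fh n) (FractionRing (Fh n)))

lemma toFH_injective {n : ℕ} : Function.Injective (toFH : Fh n →+* FH n) :=
  IsFractionRing.injective (Fh n) (FH n)

def phiIoc (n a b : ℕ) (i : Fin (n+1)) : Fh n :=
  ∏ l : Fin (n+1), ∏ m ∈ Finset.Ioc a b, (C (lam n i - lam n l) - (m : Fh n) * X)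

lemma PhiF_eq_phiIoc (n d : ℕ) (i : Fin (n+1)) : PhiF n d i = toFH (phiIoc n 0 d i) := by
  rw [PhiF, phiIoc, ← Finset.Icc_add_one_left_eq_Ioc, zero_add]

lemma phiIoc_mul_phiIoc {n a b c : ℕ} (i : Fin (n+1)) (hab : a ≤ b) (hbc : b ≤ c) :
    phiIoc n a b i * phiIoc n b c i = phiIoc n a c i := by
  simp only [phiIoc, ← Finset.prod_mul_distrib, Finset.prod_Ioc_consecutive _ hab hbc]

lemma phiIoc_ne_zero (n a b : ℕ) (i : Fin (n+1)) : phiIoc n a b i ≠ 0 := by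
  refine Finset.prod_ne_zero_iff.mpr fun l _ => Finset.prod_ne_zero_iff.mpr fun m hm h => ?_
  have hX := congrArg (Polynomial.coeff · 1) h
  simp only [coeff_sub, coeff_C, coeff_natCast_mul, coeff_X_one, mul_one, coeff_zero] at hX
  have : (m : F n) = 0 := by simpa using hX
  exact (Nat.cast_ne_zero.mpr (by have := (Finset.mem_Ioc.mp hm).1; omega)) this

/-- The factor by which `genN n d` exceeds `genN n e`. -/
def genTail (n e d : ℕ) : Polynomial (Fh n) :=
  ∏ l : Fin (n+1), ∏ m ∈ Finset.Ioc e d, (X - C (pt n l m))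

lemma eval_pt_genTail_of_lt {n e d r : ℕ} (i : Fin (n+1)) (her : e < r) (hrd : r ≤ d) :
    (genTail n e d).eval (pt n i r) = 0 := by
  rw [genTail, eval_prod]
  refine Finset.prod_eq_zero (Finset.mem_univ i) ?_
  rw [eval_prod]
  exact Finset.prod_eq_zero (Finset.mem_Ioc.mpr ⟨her, hrd⟩) (by simp)

lemma eval_pt_genTail {n e d r : ℕ} (i : Fin (n+1)) (hre : r ≤ e) (hed : e ≤ d) :
    (genTail n e d).eval (pt n i r) = phiIoc n (e - r) (d - r) i := by
  rw [genTail, phiIoc, eval_prod]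
  refine Finset.prod_congr rfl fun l _ => ?_
  have hshift : (Finset.Ioc (e - r) (d - r)).map (addRightEmbedding r) = Finset.Ioc e d := by
    rw [Finset.map_add_right_Ioc, Nat.sub_add_cancel hre, Nat.sub_add_cancel (hre.trans hed)]
  rw [eval_prod, ← hshift, Finset.prod_map]
  refine Finset.prod_congr rfl fun m _ => ?_
  simp only [addRightEmbedding_apply, eval_sub, eval_X, eval_C, pt, Nat.cast_add, C_sub]
  ring

section EulerCondition

variable {n : ℕ}

/-- The Euler condition relative to the height-`0` family `R`, imposed also for `d = 0`. -/
def EulerCondition (Ω : Fin (n+1) → F n) (R P : (d : ℕ) → ClassN n d) : Prop :=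
  ∀ d r (hr : r ≤ d) (i : Fin (n+1)),
    C (Ω i) * rest i r hr (P d) = rest i r le_rfl (R r) * rest i 0 (Nat.zero_le _) (P (d - r))

lemma EulerCondition.add {Ω : Fin (n+1) → F n} {R P P' : (d : ℕ) → ClassN n d}
    (hP : EulerCondition Ω R P) (hP' : EulerCondition Ω R P') :
    EulerCondition Ω R (fun d => P d + P' d) := by
  intro d r hr i
  simp only [map_add, mul_add, hP d r hr i, hP' d r hr i]

lemma Is01EulerData.eulerCondition {β Ω : Fin (n+1) → F n} {Q : (d : ℕ) → ℕ → ClassN n d}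
    (hQ : Is01EulerData β Ω Q) (k : ℕ) : EulerCondition Ω (Q · 0) (Q · k) := by
  intro d r hr i
  rcases Nat.eq_zero_or_pos d with rfl | hd
  · obtain rfl := Nat.le_zero.mp hr
    rw [hQ.1 0 i, pow_zero, one_mul]
  · exact hQ.2 d hd r hr i k

lemma Is01EulerData.of_eulerCondition {β Ω : Fin (n+1) → F n} {Q : (d : ℕ) → ℕ → ClassN n d}
    (h0 : ∀ (k : ℕ) i, rest i 0 le_rfl (Q 0 k) = C (β i ^ k * Ω i))
    (h : ∀ k, EulerCondition Ω (Q · 0) (Q · k)) : Is01EulerData β Ω Q :=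
  ⟨h0, fun d _ r hr i k => h k d r hr i⟩

lemma Is01EulerData.add_at_height {β Ω : Fin (n+1) → F n} {Q : (d : ℕ) → ℕ → ClassN n d}
    (hQ : Is01EulerData β Ω Q) {k0 : ℕ} (hk0 : k0 ≠ 0) {P : (d : ℕ) → ClassN n d}
    (hP0 : P 0 = 0) (hP : EulerCondition Ω (Q · 0) P) :
    Is01EulerData β Ω (fun d k => if k = k0 then Q d k0 + P d else Q d k) := by
  have height_zero : (fun d => if 0 = k0 then Q d k0 + P d else Q d 0) = (Q · 0) :=
    funext fun d => if_neg (Ne.symm hk0)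
  refine Is01EulerData.of_eulerCondition (fun k i => ?_) (fun k => ?_)
  · split_ifs with hk
    · rw [hP0, add_zero, ← hk, hQ.1 k i]
    · exact hQ.1 k i
  · rw [height_zero]
    by_cases hk : k = k0
    · simpa only [hk, if_true] using (hQ.eulerCondition k0).add hP
    · simpa only [hk, if_false] using hQ.eulerCondition k

end EulerCondition

section MulSeries

variable {n : ℕ}

/-- The product of the `q`-series `Σ f_s q^s` with a family of classes: on `N_d` it is
`Σ_{s ≤ d} f_s · P_{d-s} · genTail (d-s) d`, well defined because `genTail (d-s) d`
kills the ambiguity of the representative of `P_{d-s}`. -/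
def mulSeries (f : ℕ → F n) (P : (d : ℕ) → ClassN n d) (d : ℕ) : ClassN n d :=
  ∑ s ∈ Finset.range (d+1),
    Ideal.Quotient.mk _ (C (C (f s)) * Quotient.out (P (d - s)) * genTail n (d - s) d)

lemma mulSeries_zero {f : ℕ → F n} (hf : f 0 = 0) (P : (d : ℕ) → ClassN n d) :
    mulSeries f P 0 = 0 := by
  rw [mulSeries, Finset.sum_range_one, hf, map_zero, map_zero, zero_mul, zero_mul, map_zero]

lemma rest_mk {d : ℕ} (i : Fin (n+1)) (r : ℕ) (hr : r ≤ d) (P : Polynomial (Fh n)) :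
    rest i r hr (Ideal.Quotient.mk _ P) = P.eval (pt n i r) := rfl

lemma eval_out {d : ℕ} (i : Fin (n+1)) (r : ℕ) (hr : r ≤ d) (P : ClassN n d) :
    (Quotient.out P).eval (pt n i r) = rest i r hr P := by
  conv_rhs => rw [← Quotient.out_eq P]
  rfl

lemma rest_mulSeries (f : ℕ → F n) (P : (d : ℕ) → ClassN n d) {d r : ℕ} (hr : r ≤ d)
    (i : Fin (n+1)) :
    rest i r hr (mulSeries f P d) = ∑ s ∈ Finset.range (d - r + 1),
      C (f s) * (Quotient.out (P (d - s))).eval (pt n i r) * phiIoc n (d - s - r) (d - r) i := by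
  have hsub : Finset.range (d - r + 1) ⊆ Finset.range (d + 1) :=
    Finset.range_subset_range.mpr (by omega)
  simp only [mulSeries, map_sum, rest_mk, eval_mul, eval_C]
  rw [← Finset.sum_subset hsub fun s hs hs' => ?vanish]
  · refine Finset.sum_congr rfl fun s hs => ?_
    rw [eval_pt_genTail i (by simp at hs; omega) (Nat.sub_le d s)]
  · simp only [Finset.mem_range] at hs hs'
    rw [eval_pt_genTail_of_lt i (by omega) hr, mul_zero]

lemma EulerCondition.mulSeries {Ω : Fin (n+1) → F n} {R P : (d : ℕ) → ClassN n d}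
    (hP : EulerCondition Ω R P) (f : ℕ → F n) : EulerCondition Ω R (mulSeries f P) := by
  intro d r hr i
  rw [rest_mulSeries f P hr, rest_mulSeries f P (Nat.zero_le _), Finset.mul_sum,
    Finset.mul_sum, Nat.sub_zero]
  refine Finset.sum_congr rfl fun s hs => ?_
  have hs := Finset.mem_range.mp hs
  rw [Nat.sub_zero, Nat.sub_right_comm d r s, eval_out i r (by omega), eval_out i 0 (Nat.zero_le _)]
  linear_combination (C (f s) * phiIoc n (d - s - r) (d - r) i) * hP (d - s) r (by omega) i

lemma HGc_mulSeries (f : ℕ → F n) (P : (d : ℕ) → ClassN n d) (i : Fin (n+1)) (b e : ℕ) :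
    HGc (fun d => Iclass (mulSeries f P d)) i b e =
      mulQ (PowerSeries.mk fun e' => toFH (C (f e'))) (HGc (fun d => Iclass (P d))) i b e := by
  simp only [HGc, mulQ, Iclass, PowerSeries.coeff_mk, rest_mulSeries f P (Nat.zero_le e),
    Nat.sub_zero, map_sum, Finset.sum_div, Finset.mul_sum]
  refine Finset.sum_congr rfl fun s _ => ?_
  rw [eval_out i 0 (Nat.zero_le _)]
  have hse : e - s ≤ e := Nat.sub_le e s
  have hPhi := phiIoc_mul_phiIoc (n := n) i (Nat.zero_le _) hse
  have h0 : toFH (phiIoc n 0 (e - s) i) ≠ 0 :=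
    (map_ne_zero_iff _ toFH_injective).mpr (phiIoc_ne_zero _ _ _ _)
  have h1 : toFH (phiIoc n (e - s) e i) ≠ 0 :=
    (map_ne_zero_iff _ toFH_injective).mpr (phiIoc_ne_zero _ _ _ _)
  rw [PhiF_eq_phiIoc, PhiF_eq_phiIoc, ← hPhi, map_mul, map_mul, map_mul]
  field_simp

end MulSeries

theorem mirror_transformation_add_general (n : ℕ)
    (Ω : Fin (n+1) → F n)
    (Q : (d : ℕ) → ℕ → ClassN n d)
    (hQ : Is01EulerData (lam n) Ω Q)
    (k0 : ℕ) (hk0 : 1 ≤ k0) (kstar : ℕ)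
    (f : ℕ → F n) (hf : f 0 = 0) :
    ∃ Q' : (d : ℕ) → ℕ → ClassN n d,
      Is01EulerData (lam n) Ω Q' ∧
      Linked0 (fun d => Q d 0) (fun d => Q' d 0) ∧
      (∀ (d k : ℕ), k ≠ k0 → Q' d k = Q d k) ∧
      (∀ (i : Fin (n+1)) (b e : ℕ),
        HGc (fun d => Iclass (Q' d k0)) i b e =
          HGc (fun d => Iclass (Q d k0)) i b e +
            mulQ (PowerSeries.mk fun e' => toFH (C (f e')))
              (HGc (fun d => Iclass (Q d kstar))) i b e) := by
  have hk0 : k0 ≠ 0 := Nat.one_le_iff_ne_zero.mp hk0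
  refine ⟨fun d k => if k = k0 then Q d k0 + mulSeries f (Q · kstar) d else Q d k,
    hQ.add_at_height hk0 (mulSeries_zero hf _) ((hQ.eulerCondition kstar).mulSeries f),
    fun d _ i j _ => by simp only [if_neg (Ne.symm hk0)],
    fun d k hk => if_neg hk, fun i b e => ?_⟩
  rw [← HGc_mulSeries]
  simp only [if_true, HGc, Iclass, map_add, add_div, mul_add]

/-- **Mirror transformation of height `k₀`, additive form** (Lemma 4.4 of the
paper): given self-conjugate `(0,1,p,Ω)`-Euler data `Q`, heights `k₀ ≥ 1` and
`k★`, and `f ∈ q·F[[q]]`, there is a `(0,1,p,Ω)`-Euler data `Q̃` linked to `Q`,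
agreeing with `Q` at all heights `k ≠ k₀`, with
`HG[𝓘(Q̃_{k₀})] = HG[𝓘(Q_{k₀})] + f·HG[𝓘(Q_{k★})]`. -/
theorem mirror_transformation_add (n : ℕ) (hn : 1 ≤ n)
    (Ω : Fin (n+1) → F n) (hΩ : ∀ i, Ω i ≠ 0)
    (Q : (d : ℕ) → ℕ → ClassN n d)
    (hQ : Is01EulerData (lam n) Ω Q)
    (hconj : SelfConjugate (fun d => Q d 0))
    (k0 : ℕ) (hk0 : 1 ≤ k0) (kstar : ℕ)
    (f : ℕ → F n) (hf : f 0 = 0) :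
    ∃ Q' : (d : ℕ) → ℕ → ClassN n d,
      Is01EulerData (lam n) Ω Q' ∧
      Linked0 (fun d => Q d 0) (fun d => Q' d 0) ∧
      (∀ (d k : ℕ), k ≠ k0 → Q' d k = Q d k) ∧
      (∀ (i : Fin (n+1)) (b e : ℕ),
        HGc (fun d => Iclass (Q' d k0)) i b e =
          HGc (fun d => Iclass (Q d k0)) i b e +
            mulQ (PowerSeries.mk fun e' => toFH (C (f e')))
              (HGc (fun d => Iclass (Q d kstar))) i b e) :=
  mirror_transformation_add_general n Ω Q hQ k0 hk0 kstar f hf
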